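/- (Proposition 2: the S6/Mamba block is not permutation equivariant.) There exist real parameters $w_\Delta, b_\Delta, w_A, w_B, w_C, w_D \in \mathbb{R}$ and an input pair $x_0, x_1 \in \mathbb{R}$ such that the scalar S6 block with these parameters, namely $\Delta_i = \log(1 + \exp(w_\Delta x_i + b_\Delta))$, $A_i = \exp(-\Delta_i w_A)$, $B_i = \Delta_i w_B x_i$, $C_i = w_C x_i$, $D_i = w_D x_i$, with outputs $Y_0(x_0, x_1) = C_0 B_0 x_0 + D_0 x_0$ and $Y_1(x_0, x_1) = C_1 A_1 B_0 x_0 + C_1 B_1 x_1 + D_1 x_1$, fails to be equivariant under swapping the two inputs: $(Y_0(x_1, x_0), Y_1(x_1, x_0)) \ne (Y_1(x_0, x_1), Y_0(x_0, x_1))$. -/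
import Mathlib

open Real

namespace S6Scalar

/-- `Δ(x) = softplus (w_Δ x + b_Δ) = log (1 + exp (w_Δ x + b_Δ))`. -/
noncomputable def Δ (wΔ bΔ x : ℝ) : ℝ := Real.log (1 + Real.exp (wΔ * x + bΔ))

/-- `A(x) = exp (-Δ(x) w_A)`. -/
noncomputable def A (wΔ bΔ wA x : ℝ) : ℝ := Real.exp (-(Δ wΔ bΔ x) * wA)

/-- `B(x) = Δ(x) w_B x`. -/
noncomputable def B (wΔ bΔ wB x : ℝ) : ℝ := Δ wΔ bΔ x * wB * x

/-- `C(x) = w_C x`. -/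
def C (wC x : ℝ) : ℝ := wC * x

/-- `D(x) = w_D x`. -/
def D (wD x : ℝ) : ℝ := wD * x

/-- First output of the scalar S6 block on the length-2 sequence `(x₀, x₁)`:
`Y₀ = C₀ B₀ x₀ + D₀ x₀`. -/
noncomputable def Y0 (wΔ bΔ wA wB wC wD x0 x1 : ℝ) : ℝ :=
  C wC x0 * B wΔ bΔ wB x0 * x0 + D wD x0 * x0

/-- Second output of the scalar S6 block on the length-2 sequence `(x₀, x₁)`:
`Y₁ = C₁ A₁ B₀ x₀ + C₁ B₁ x₁ + D₁ x₁`. -/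
noncomputable def Y1 (wΔ bΔ wA wB wC wD x0 x1 : ℝ) : ℝ :=
  C wC x1 * A wΔ bΔ wA x1 * B wΔ bΔ wB x0 * x0 +
    C wC x1 * B wΔ bΔ wB x1 * x1 + D wD x1 * x1

/-- Proposition 2: the S6/Mamba block is not permutation equivariant. There are
parameters and a pair of inputs such that swapping the two inputs does not swap
the two outputs. -/
theorem s6_not_permutation_equivariant :
    ∃ wΔ bΔ wA wB wC wD x0 x1 : ℝ,
      (Y0 wΔ bΔ wA wB wC wD x1 x0, Y1 wΔ bΔ wA wB wC wD x1 x0) ≠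
        (Y1 wΔ bΔ wA wB wC wD x0 x1, Y0 wΔ bΔ wA wB wC wD x0 x1) := by
  refine ⟨0, 0, 0, 1, 1, 0, 1, 2, fun h => ?_⟩
  have h1 := congrArg Prod.fst h
  simp only [Y0, Y1, C, B, D, A, Δ] at h1
  norm_num at h1

end S6Scalar
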